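/- Quadratic scaling on Brownian marginals: let (D_t)_{t∈[0,T]} be a distribution invariant dynamic deviation measure on a filtered probability space supporting a one-dimensional Brownian motion (B_t)_{t∈[0,T]} adapted to (F_t) with B_t − B_s independent of F_s and distributed N(0, t−s) for s ≤ t. Then there exists α > 0 such that for every σ ∈ ℝ and every t ∈ [0,T], D_0(σ B_t) = α σ² t; equivalently, for a standard normal random variable Z in L²(F_T), the function f(σ) := D_0(σZ) satisfies f(σ) = α σ² for all σ ∈ ℝ. -/

import Mathlib

/-!
Let `ψ(v)` be the value of `D₀` on a centred Gaussian variable of variance `v`; it is well defined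
by distribution invariance. For `0 ≤ s ≤ T`, write `c B_T = c B_s + c (B_T - B_s)`. The recursion
`D₀(X) = D₀(E[X | F_s]) + E[D_s(X)]`, applied to `c B_T` and to the increment, which is independent
of `F_s`, together with the invariance of `D_s` under the `F_s`-measurable shift `c B_s`, gives
`ψ(c² T) = ψ(c² s) + ψ(c² (T - s))`. Choosing `c` and `s` shows that `ψ` is additive on `[0, ∞)`;
being nonnegative it is monotone, hence linear, and `ψ(1) > 0` because `D₀` vanishes only on
deterministic variables.
-/

open MeasureTheory

/-- An `m`-conditional convex deviation measure on `L²` (the ambient σ-algebra plays the role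
of `F_T`): a map `D` into `m`-measurable square-integrable random variables which is
normalized, translation invariant (D1), positive with the `m`-measurability characterization
of the kernel (D2), and conditionally convex (D3). -/
def IsCondDeviation {Ω : Type*} {m0 : MeasurableSpace Ω} (μ : Measure Ω)
    (m : MeasurableSpace Ω) (D : (Ω → ℝ) → Ω → ℝ) : Prop :=
  (∀ X : Ω → ℝ, MemLp X 2 μ → StronglyMeasurable[m] (D X) ∧ MemLp (D X) 2 μ) ∧
  -- normalization
  D 0 =ᵐ[μ] 0 ∧
  -- (D1) translation invariance
  (∀ X : Ω → ℝ, MemLp X 2 μ → ∀ c : Ω → ℝ, Measurable[m] c → (∃ C : ℝ, ∀ ω, |c ω| ≤ C) →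
    D (X + c) =ᵐ[μ] D X) ∧
  -- (D2) positivity
  (∀ X : Ω → ℝ, MemLp X 2 μ → (0 ≤ᵐ[μ] D X) ∧
    (D X =ᵐ[μ] 0 ↔ ∃ Y : Ω → ℝ, Measurable[m] Y ∧ X =ᵐ[μ] Y)) ∧
  -- (D3) conditional convexity
  (∀ X Y : Ω → ℝ, MemLp X 2 μ → MemLp Y 2 μ →
    ∀ lam : Ω → ℝ, Measurable[m] lam → (∀ ω, 0 ≤ lam ω) → (∀ ω, lam ω ≤ 1) →
    D (fun ω => lam ω * X ω + (1 - lam ω) * Y ω) ≤ᵐ[μ]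
      fun ω => lam ω * D X ω + (1 - lam ω) * D Y ω)

/-- A dynamic deviation measure on `[0,T]`: a family of conditional convex deviation measures
satisfying (D4) `L²`-continuity and (D5) recursiveness. -/
structure IsDynamicDeviation {Ω : Type*} {m0 : MeasurableSpace Ω} (μ : Measure Ω)
    (F : ℝ → MeasurableSpace Ω) (T : ℝ) (D : ℝ → (Ω → ℝ) → Ω → ℝ) : Prop where
  cond : ∀ t ∈ Set.Icc (0 : ℝ) T, IsCondDeviation μ (F t) (D t)
  -- (D4) continuity: if `Xₙ → X` in `L²` then `D_t(Xₙ) → D_t(X)` in `L²`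
  cont : ∀ t ∈ Set.Icc (0 : ℝ) T, ∀ (X : ℕ → Ω → ℝ) (X₀ : Ω → ℝ),
    (∀ k, MemLp (X k) 2 μ) → MemLp X₀ 2 μ →
    Filter.Tendsto (fun k => eLpNorm (X k - X₀) 2 μ) Filter.atTop (nhds 0) →
    Filter.Tendsto (fun k => eLpNorm (D t (X k) - D t X₀) 2 μ) Filter.atTop (nhds 0)
  -- (D5) recursiveness
  recur : ∀ t s : ℝ, 0 ≤ t → t ≤ s → s ≤ T → ∀ X : Ω → ℝ, MemLp X 2 μ →
    D t X =ᵐ[μ] D t (μ[X|F s]) + μ[D s X|F t]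

/-- Distribution invariance of a dynamic deviation measure: `D_0(X₁) = D_0(X₂)` whenever
`X₁, X₂ ∈ L²` have the same law. -/
def DistInvariant {Ω : Type*} {m0 : MeasurableSpace Ω} (μ : Measure Ω)
    (D : ℝ → (Ω → ℝ) → Ω → ℝ) : Prop :=
  ∀ X₁ X₂ : Ω → ℝ, MemLp X₁ 2 μ → MemLp X₂ 2 μ →
    μ.map X₁ = μ.map X₂ → D 0 X₁ =ᵐ[μ] D 0 X₂

open ProbabilityTheory Filter Topology Set
open scoped NNReal ENNReal

theorem eq_mul_apply_one_of_add_of_nonneg {f : ℝ → ℝ}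
    (hadd : ∀ a b, 0 ≤ a → 0 ≤ b → f (a + b) = f a + f b) (hnn : ∀ a, 0 ≤ a → 0 ≤ f a)
    {x : ℝ} (hx : 0 ≤ x) : f x = x * f 1 := by
  have hmono : ∀ a b, 0 ≤ a → a ≤ b → f a ≤ f b := fun a b ha hab => by
    have h := hadd a (b - a) ha (sub_nonneg.2 hab)
    rw [add_sub_cancel] at h
    linarith [hnn _ (sub_nonneg.2 hab)]
  have hnat : ∀ (n : ℕ) {y : ℝ}, 0 ≤ y → f (n * y) = n * f y := by
    intro n y hy
    induction n with
    | zero => simpa using hadd 0 0 le_rfl le_rfl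
    | succ n ih => rw [Nat.cast_succ, add_mul, one_mul, hadd _ _ (by positivity) hy, ih]; ring
  have hint : ∀ k : ℕ, f k = k * f 1 := fun k => by simpa using hnat k zero_le_one
  -- `(n + 1) x` lies between the integers `⌊(n + 1) x⌋` and `⌊(n + 1) x⌋ + 1`
  have hbound : ∀ n : ℕ, |f x - x * f 1| ≤ f 1 * (1 / ((n : ℝ) + 1)) := by
    intro n
    have hN : (0 : ℝ) < n + 1 := by positivity
    have hscale : f ((n + 1) * x) = (n + 1) * f x := by exact_mod_cast hnat (n + 1) hx
    set k := ⌊((n : ℝ) + 1) * x⌋₊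
    have hk : (k : ℝ) ≤ (n + 1) * x := Nat.floor_le (by positivity)
    have hk' : (n + 1) * x ≤ (k + 1 : ℕ) := by push_cast; exact (Nat.lt_floor_add_one _).le
    have hlow := hint k ▸ hscale ▸ hmono _ _ (Nat.cast_nonneg k) hk
    have hup := hint (k + 1) ▸ hscale ▸ hmono _ _ (by positivity) hk'
    have h1 := hnn 1 zero_le_one
    have hk1 := mul_le_mul_of_nonneg_right hk h1
    have hk1' := mul_le_mul_of_nonneg_right hk' h1
    push_cast at hup hk1'
    rw [mul_one_div, le_div_iff₀ hN, ← abs_of_pos hN, ← abs_mul, abs_le]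
    constructor <;> linarith
  have h := ge_of_tendsto' (tendsto_one_div_add_atTop_nhds_zero_nat.const_mul (f 1)) hbound
  rw [mul_zero, abs_nonpos_iff, sub_eq_zero] at h
  exact h

section Lp

variable {α : Type*} {m : MeasurableSpace α} {μ : Measure α} [IsFiniteMeasure μ] {p : ℝ≥0∞}

theorem tendsto_eLpNorm_zero_of_dominated {E : Type*} [NormedAddCommGroup E] (hp : 1 ≤ p)
    (hp' : p ≠ ∞) {f : ℕ → α → E} {g : α → E} (hf : ∀ n, AEStronglyMeasurable (f n) μ)
    (hg : MemLp g p μ) (hfg : ∀ n x, ‖f n x‖ ≤ ‖g x‖)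
    (hlim : ∀ᵐ x ∂μ, Tendsto (fun n => f n x) atTop (𝓝 0)) :
    Tendsto (fun n => eLpNorm (f n) p μ) atTop (𝓝 0) := by
  have hui : UnifIntegrable f p μ := fun ε hε => by
    obtain ⟨δ, hδ, hgδ⟩ := unifIntegrable_const (ι := Unit) hp hp' hg hε
    refine ⟨δ, hδ, fun n s hs hμs => (eLpNorm_mono fun x => ?_).trans (hgδ () s hs hμs)⟩
    by_cases hx : x ∈ s <;> simp [hx, hfg n x]
  simpa using tendsto_Lp_finite_of_tendsto_ae hp hp' hf MemLp.zero hui hlim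

theorem tendsto_eLpNorm_indicator_abs_le_sub {c : α → ℝ} (hp : 1 ≤ p) (hp' : p ≠ ∞)
    (hcm : Measurable c) (hc : MemLp c p μ) :
    Tendsto (fun n : ℕ => eLpNorm ({x | |c x| ≤ n}.indicator c - c) p μ) atTop (𝓝 0) := by
  refine tendsto_eLpNorm_zero_of_dominated hp hp' (fun n => ?_) hc (fun n x => ?_) ?_
  · exact ((hcm.indicator (measurableSet_le hcm.abs measurable_const)).sub
      hcm).aestronglyMeasurable
  · by_cases hx : |c x| ≤ n <;> simp [Set.indicator, hx]
  · refine ae_of_all _ fun x => tendsto_atTop_of_eventually_const (i₀ := ⌈|c x|⌉₊) fun n hn => ?_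
    simp [Set.indicator, (Nat.le_ceil _).trans (Nat.cast_le.2 hn)]

end Lp

section Gaussian

variable {Ω : Type*} {m0 : MeasurableSpace Ω} {μ : Measure Ω} {X : Ω → ℝ}

theorem memLp_of_hasLaw_gaussianReal {m : ℝ} {v : ℝ≥0} (hX : HasLaw X (gaussianReal m v) μ)
    {p : ℝ≥0∞} (hp : p ≠ ∞) : MemLp X p μ := by
  have h := memLp_id_gaussianReal' (μ := m) (v := v) p hp
  rw [← hX.map_eq] at h
  exact (memLp_map_measure_iff aestronglyMeasurable_id hX.aemeasurable).1 h

theorem hasLaw_const_mul_gaussianReal {v : ℝ} (hv : 0 ≤ v)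
    (hX : HasLaw X (gaussianReal 0 v.toNNReal) μ) (c : ℝ) :
    HasLaw (fun ω => c * X ω) (gaussianReal 0 (c ^ 2 * v).toNNReal) μ := by
  convert gaussianReal_const_mul hX c using 2
  · ring
  · ext; simp [hv, mul_nonneg (sq_nonneg c) hv]

theorem gaussianReal_ne_dirac {v : ℝ≥0} (hv : v ≠ 0) (m x : ℝ) :
    gaussianReal m v ≠ Measure.dirac x := by
  have := nullSingletonClass_gaussianReal (μ := m) hv
  intro h
  simpa [h] using measure_singleton (μ := gaussianReal m v) x

end Gaussian

namespace IsCondDeviation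

variable {Ω : Type*} {m0 : MeasurableSpace Ω} {μ : Measure Ω} {m : MeasurableSpace Ω}
  {D : (Ω → ℝ) → Ω → ℝ} {X : Ω → ℝ}

theorem memLp (hD : IsCondDeviation μ m D) (hX : MemLp X 2 μ) : MemLp (D X) 2 μ :=
  (hD.1 X hX).2

theorem add_ae_eq (hD : IsCondDeviation μ m D) (hX : MemLp X 2 μ) {c : Ω → ℝ}
    (hc : Measurable[m] c) (hcb : ∃ C, ∀ ω, |c ω| ≤ C) : D (X + c) =ᵐ[μ] D X :=
  hD.2.2.1 X hX c hc hcb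

theorem const_ae_eq_zero (hD : IsCondDeviation μ m D) (k : ℝ) : D (fun _ => k) =ᵐ[μ] 0 := by
  simpa using (hD.add_ae_eq MemLp.zero measurable_const ⟨|k|, fun _ => le_rfl⟩).trans hD.2.1

theorem nonneg (hD : IsCondDeviation μ m D) (hX : MemLp X 2 μ) : 0 ≤ᵐ[μ] D X :=
  (hD.2.2.2.1 X hX).1

theorem eq_const_of_bot (hD : IsCondDeviation μ ⊥ D) (hX : MemLp X 2 μ) :
    ∃ c, D X = fun _ => c :=
  stronglyMeasurable_bot_iff.1 (hD.1 X hX).1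

theorem exists_hasLaw_dirac [IsProbabilityMeasure μ] (hD : IsCondDeviation μ ⊥ D)
    (hX : MemLp X 2 μ) (hX0 : D X =ᵐ[μ] 0) : ∃ c, HasLaw X (Measure.dirac c) μ := by
  obtain ⟨Y, hYm, hXY⟩ := (hD.2.2.2.1 X hX).2.1 hX0
  obtain ⟨c, rfl⟩ := eq_const_of_measurable_bot hYm
  exact ⟨c, hasLaw_dirac_of_ae_eq hXY⟩

end IsCondDeviation

namespace IsDynamicDeviation

variable {Ω : Type*} {m0 : MeasurableSpace Ω} {μ : Measure Ω} {F : ℝ → MeasurableSpace Ω}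
  {T t s : ℝ} {D : ℝ → (Ω → ℝ) → Ω → ℝ} {X Y : Ω → ℝ}

theorem ae_eq_of_tendsto (hD : IsDynamicDeviation μ F T D) (ht : t ∈ Icc 0 T)
    {X : ℕ → Ω → ℝ} {X₀ : Ω → ℝ} (hX : ∀ n, MemLp (X n) 2 μ) (hX₀ : MemLp X₀ 2 μ)
    (hY : MemLp Y 2 μ) (hlim : Tendsto (fun n => eLpNorm (X n - X₀) 2 μ) atTop (𝓝 0))
    (heq : ∀ n, D t (X n) =ᵐ[μ] D t Y) : D t X₀ =ᵐ[μ] D t Y := by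
  have hconst : ∀ n, eLpNorm (D t (X n) - D t X₀) 2 μ = eLpNorm (D t Y - D t X₀) 2 μ :=
    fun n => eLpNorm_congr_ae ((heq n).sub EventuallyEq.rfl)
  have h0 := tendsto_const_nhds_iff.1 ((hD.cont t ht X X₀ hX hX₀ hlim).congr hconst)
  rw [eLpNorm_eq_zero_iff (((hD.cond t ht).memLp hY).sub ((hD.cond t ht).memLp hX₀)).1
    two_ne_zero, sub_ae_eq_zero] at h0
  exact h0.symm

theorem ae_congr (hD : IsDynamicDeviation μ F T D) (ht : t ∈ Icc 0 T) (hX : MemLp X 2 μ)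
    (hY : MemLp Y 2 μ) (hXY : X =ᵐ[μ] Y) : D t X =ᵐ[μ] D t Y := by
  refine hD.ae_eq_of_tendsto ht (X := fun _ => Y) (fun _ => hY) hX hY ?_ fun _ => .rfl
  simp [eLpNorm_congr_ae ((sub_ae_eq_zero _ _).2 hXY.symm)]

theorem add_ae_eq_of_memLp [IsFiniteMeasure μ] (hD : IsDynamicDeviation μ F T D)
    (hFle : F t ≤ m0) (ht : t ∈ Icc 0 T) (hX : MemLp X 2 μ) {c : Ω → ℝ}
    (hcm : Measurable[F t] c) (hc : MemLp c 2 μ) : D t (X + c) =ᵐ[μ] D t X := by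
  set cn : ℕ → Ω → ℝ := fun n => {ω | |c ω| ≤ n}.indicator c
  have hS : ∀ n : ℕ, MeasurableSet[F t] {ω | |c ω| ≤ n} := fun n =>
    (continuous_abs.measurable.comp hcm) measurableSet_Iic
  have hcnm : ∀ n, Measurable[F t] (cn n) := fun n => hcm.indicator (hS n)
  have hcn : ∀ n, MemLp (X + cn n) 2 μ := fun n => hX.add (hc.indicator (hFle _ (hS n)))
  refine hD.ae_eq_of_tendsto ht hcn (hX.add hc) hX ?_ fun n => ?_
  · simpa [cn] using tendsto_eLpNorm_indicator_abs_le_sub one_le_two ENNReal.ofNat_ne_top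
      (hcm.mono hFle le_rfl) hc
  · refine (hD.cond t ht).add_ae_eq hX (hcnm n) ⟨n, fun ω => ?_⟩
    by_cases hω : |c ω| ≤ n <;> simp [cn, hω]

theorem add_ae_eq_add_of_indep [IsProbabilityMeasure μ] (hD : IsDynamicDeviation μ F T D)
    (hFle : F s ≤ m0) (ht : 0 ≤ t) (hts : t ≤ s) (hsT : s ≤ T) {Y Δ : Ω → ℝ}
    (hYm : Measurable[F s] Y) (hY : MemLp Y 2 μ) (hΔm : Measurable Δ) (hΔ : MemLp Δ 2 μ)
    (hind : Indep (MeasurableSpace.comap Δ inferInstance) (F s) μ) :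
    D t (Y + Δ) =ᵐ[μ] D t Y + D t Δ := by
  have htIcc : t ∈ Icc 0 T := ⟨ht, hts.trans hsT⟩
  have hsIcc : s ∈ Icc 0 T := ⟨ht.trans hts, hsT⟩
  have hDt := hD.cond t htIcc
  have hΔcond : μ[Δ | F s] =ᵐ[μ] fun _ => μ[Δ] :=
    condExp_indep_eq hΔm.comap_le hFle (comap_measurable Δ).stronglyMeasurable hind
  have hYΔcond : μ[Y + Δ | F s] =ᵐ[μ] Y + fun _ => μ[Δ] := by
    refine (condExp_add (hY.integrable one_le_two) (hΔ.integrable one_le_two) _).trans ?_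
    rw [condExp_of_stronglyMeasurable hFle hYm.stronglyMeasurable (hY.integrable one_le_two)]
    exact EventuallyEq.rfl.add hΔcond
  have hYc : MemLp (Y + fun _ => μ[Δ]) 2 μ := hY.add (memLp_const _)
  have hfirst : D t (μ[Y + Δ | F s]) =ᵐ[μ] D t Y :=
    (hD.ae_congr htIcc (hYc.ae_eq hYΔcond.symm) hYc hYΔcond).trans
      (hDt.add_ae_eq hY measurable_const ⟨|μ[Δ]|, fun _ => le_rfl⟩)
  have hfirstΔ : D t (μ[Δ | F s]) =ᵐ[μ] 0 :=
    (hD.ae_congr htIcc ((memLp_const _).ae_eq hΔcond.symm) (memLp_const _) hΔcond).trans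
      (hDt.const_ae_eq_zero _)
  have hsecond : μ[D s (Y + Δ) | F t] =ᵐ[μ] μ[D s Δ | F t] := by
    rw [add_comm]
    exact condExp_congr_ae (hD.add_ae_eq_of_memLp hFle hsIcc hΔ hYm hY)
  -- both recursions end in the same term `μ[D s Δ | F t]`
  filter_upwards [hD.recur t s ht hts hsT _ (hY.add hΔ), hD.recur t s ht hts hsT Δ hΔ, hfirst,
    hfirstΔ, hsecond] with ω h1 h2 h3 h4 h5
  simp only [Pi.add_apply, Pi.zero_apply] at h1 h2 h3 h4 h5 ⊢
  linarith

end IsDynamicDeviation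

section LawDeviation

variable {Ω : Type*} {m0 : MeasurableSpace Ω} {μ : Measure Ω}

open Classical in
/-- The value `f(ν)` of `D₀` on an `L²` variable of law `ν` (`0` if there is none); by distribution
invariance it does not depend on the choice of the variable. -/
noncomputable def lawDeviation (μ : Measure Ω) (D₀ : (Ω → ℝ) → Ω → ℝ) (ν : Measure ℝ) : ℝ :=
  if h : ∃ X, MemLp X 2 μ ∧ HasLaw X ν μ then μ[D₀ h.choose] else 0

theorem lawDeviation_nonneg {m : MeasurableSpace Ω} {D₀ : (Ω → ℝ) → Ω → ℝ}
    (hD₀ : IsCondDeviation μ m D₀) (ν : Measure ℝ) : 0 ≤ lawDeviation μ D₀ ν := by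
  unfold lawDeviation
  split_ifs with h
  · exact integral_nonneg_of_ae (hD₀.nonneg h.choose_spec.1)
  · exact le_rfl

variable [IsProbabilityMeasure μ] {D : ℝ → (Ω → ℝ) → Ω → ℝ} {X : Ω → ℝ} {ν : Measure ℝ}

theorem DistInvariant.ae_eq_lawDeviation (hinv : DistInvariant μ D)
    (hD₀ : IsCondDeviation μ ⊥ (D 0)) (hX : MemLp X 2 μ) (hXν : HasLaw X ν μ) :
    D 0 X =ᵐ[μ] fun _ => lawDeviation μ (D 0) ν := by
  have h : ∃ X, MemLp X 2 μ ∧ HasLaw X ν μ := ⟨X, hX, hXν⟩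
  obtain ⟨hY, hYν⟩ := h.choose_spec
  obtain ⟨c, hc⟩ := hD₀.eq_const_of_bot hY
  refine (hinv X _ hX hY (hXν.map_eq.trans hYν.map_eq.symm)).trans ?_
  simp [lawDeviation, h, hc]

theorem DistInvariant.lawDeviation_pos (hinv : DistInvariant μ D)
    (hD₀ : IsCondDeviation μ ⊥ (D 0)) (hX : MemLp X 2 μ) (hXν : HasLaw X ν μ)
    (hν : ∀ x, ν ≠ Measure.dirac x) : 0 < lawDeviation μ (D 0) ν := by
  refine (lawDeviation_nonneg hD₀ ν).lt_of_ne fun h => ?_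
  have hX0 : D 0 X =ᵐ[μ] 0 := (hinv.ae_eq_lawDeviation hD₀ hX hXν).trans (by rw [← h]; rfl)
  obtain ⟨c, hc⟩ := hD₀.exists_hasLaw_dirac hX hX0
  exact hν c (hXν.map_eq.symm.trans hc.map_eq)

end LawDeviation

structure IsBrownianMotion {Ω : Type*} {m0 : MeasurableSpace Ω} (μ : Measure Ω)
    (F : ℝ → MeasurableSpace Ω) (T : ℝ) (B : ℝ → Ω → ℝ) : Prop where
  zero : ∀ ω, B 0 ω = 0
  adapted : ∀ t ∈ Icc 0 T, Measurable[F t] (B t)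
  indep : ∀ s t : ℝ, 0 ≤ s → s ≤ t → t ≤ T →
    Indep (MeasurableSpace.comap (fun ω => B t ω - B s ω) inferInstance) (F s) μ
  gaussian : ∀ s t : ℝ, 0 ≤ s → s ≤ t → t ≤ T →
    μ.map (fun ω => B t ω - B s ω) = gaussianReal 0 (t - s).toNNReal

namespace IsBrownianMotion

variable {Ω : Type*} {m0 : MeasurableSpace Ω} {μ : Measure Ω} {F : ℝ → MeasurableSpace Ω}
  {T s t : ℝ} {B : ℝ → Ω → ℝ}

theorem measurable (hB : IsBrownianMotion μ F T B) (hFle : ∀ t, F t ≤ m0) (ht : t ∈ Icc 0 T) :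
    Measurable (B t) :=
  (hB.adapted t ht).mono (hFle t) le_rfl

theorem hasLaw_const_mul_sub (hB : IsBrownianMotion μ F T B) (hFle : ∀ t, F t ≤ m0)
    (hs : 0 ≤ s) (hst : s ≤ t) (htT : t ≤ T) (c : ℝ) :
    HasLaw (fun ω => c * (B t ω - B s ω)) (gaussianReal 0 (c ^ 2 * (t - s)).toNNReal) μ := by
  refine hasLaw_const_mul_gaussianReal (sub_nonneg.2 hst) ⟨?_, hB.gaussian s t hs hst htT⟩ c
  exact ((hB.measurable hFle ⟨hs.trans hst, htT⟩).sub
    (hB.measurable hFle ⟨hs, hst.trans htT⟩)).aemeasurable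

theorem hasLaw_const_mul (hB : IsBrownianMotion μ F T B) (hFle : ∀ t, F t ≤ m0)
    (ht : t ∈ Icc 0 T) (c : ℝ) :
    HasLaw (fun ω => c * B t ω) (gaussianReal 0 (c ^ 2 * t).toNNReal) μ := by
  simpa [hB.zero] using hB.hasLaw_const_mul_sub hFle le_rfl ht.1 ht.2 c

variable [IsProbabilityMeasure μ] {D : ℝ → (Ω → ℝ) → Ω → ℝ}

theorem deviation_const_mul_add (hB : IsBrownianMotion μ F T B) (hFle : ∀ t, F t ≤ m0)
    (hD : IsDynamicDeviation μ F T D) {u : ℝ} (hu : 0 ≤ u) (hus : u ≤ s) (hst : s ≤ t)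
    (htT : t ≤ T) (c : ℝ) :
    D u (fun ω => c * B t ω) =ᵐ[μ]
      D u (fun ω => c * B s ω) + D u (fun ω => c * (B t ω - B s ω)) := by
  have hs : 0 ≤ s := hu.trans hus
  have hsplit : (fun ω => c * B t ω) = (fun ω => c * B s ω) + fun ω => c * (B t ω - B s ω) := by
    ext ω; simp only [Pi.add_apply]; ring
  have hinc := hB.hasLaw_const_mul_sub hFle hs hst htT c
  rw [hsplit]
  refine hD.add_ae_eq_add_of_indep (hFle s) hu hus (hst.trans htT)
    ((hB.adapted s ⟨hs, hst.trans htT⟩).const_mul c)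
    (memLp_of_hasLaw_gaussianReal (hB.hasLaw_const_mul hFle ⟨hs, hst.trans htT⟩ c)
      ENNReal.ofNat_ne_top)
    (((hB.measurable hFle ⟨hs.trans hst, htT⟩).sub
      (hB.measurable hFle ⟨hs, hst.trans htT⟩)).const_mul c)
    (memLp_of_hasLaw_gaussianReal hinc ENNReal.ofNat_ne_top)
    (indep_of_indep_of_le_left (hB.indep s t hs hst htT) ?_)
  exact measurable_iff_comap_le.1 ((comap_measurable _).const_mul c)

theorem lawDeviation_gaussianReal_add (hB : IsBrownianMotion μ F T B) (hFle : ∀ t, F t ≤ m0)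
    (hT : 0 < T) (hF0 : F 0 = ⊥) (hD : IsDynamicDeviation μ F T D) (hinv : DistInvariant μ D)
    {a b : ℝ} (ha : 0 ≤ a) (hb : 0 ≤ b) :
    lawDeviation μ (D 0) (gaussianReal 0 (a + b).toNNReal) =
      lawDeviation μ (D 0) (gaussianReal 0 a.toNNReal) +
        lawDeviation μ (D 0) (gaussianReal 0 b.toNNReal) := by
  have hD0 : IsCondDeviation μ ⊥ (D 0) := hF0 ▸ hD.cond 0 ⟨le_rfl, hT.le⟩
  have hψ : ∀ {X : Ω → ℝ} {v : ℝ}, HasLaw X (gaussianReal 0 v.toNNReal) μ →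
      D 0 X =ᵐ[μ] fun _ => lawDeviation μ (D 0) (gaussianReal 0 v.toNNReal) := fun hX =>
    hinv.ae_eq_lawDeviation hD0 (memLp_of_hasLaw_gaussianReal hX ENNReal.ofNat_ne_top) hX
  set c := √((a + b) / T)
  set s := a / (a + b) * T
  have hs : 0 ≤ s := by positivity
  have hsT : s ≤ T := mul_le_of_le_one_left hT.le (div_le_one_of_le₀ (by linarith) (by linarith))
  have hc : c ^ 2 = (a + b) / T := Real.sq_sqrt (by positivity)
  have hvar : c ^ 2 * T = a + b ∧ c ^ 2 * s = a ∧ c ^ 2 * (T - s) = b := by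
    rcases (add_nonneg ha hb).eq_or_lt with hab | hab
    · obtain ⟨rfl, rfl⟩ : a = 0 ∧ b = 0 := ⟨by linarith, by linarith⟩
      simp [c, s]
    · have hsab : (a + b) * s = a * T := by simp only [s]; field_simp
      rw [hc]
      refine ⟨by field_simp, ?_, ?_⟩ <;> field_simp <;> linarith
  have key := (hψ (hB.hasLaw_const_mul hFle ⟨hT.le, le_rfl⟩ c)).symm.trans <|
    (hB.deviation_const_mul_add hFle hD le_rfl hs hsT le_rfl c).trans <|
      (hψ (hB.hasLaw_const_mul hFle ⟨hs, hsT⟩ c)).add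
        (hψ (hB.hasLaw_const_mul_sub hFle hs hsT le_rfl c))
  rw [hvar.1, hvar.2.1, hvar.2.2] at key
  obtain ⟨_, h⟩ := key.eventually.exists
  exact h

end IsBrownianMotion

theorem distInvariant_quadratic_scaling_general {Ω : Type*} {m0 : MeasurableSpace Ω}
    (μ : Measure Ω) [IsProbabilityMeasure μ] (T : ℝ) (hT : 0 < T)
    (F : ℝ → MeasurableSpace Ω) (hFle : ∀ s, F s ≤ m0)
    (hF0 : F 0 = ⊥)
    -- a one-dimensional Brownian motion on `[0,T]` adapted to `F`
    (B : ℝ → Ω → ℝ) (hB0 : ∀ ω, B 0 ω = 0)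
    (hBadapted : ∀ t ∈ Set.Icc (0 : ℝ) T, Measurable[F t] (B t))
    (hBindep : ∀ s t : ℝ, 0 ≤ s → s ≤ t → t ≤ T →
      ProbabilityTheory.Indep
        (MeasurableSpace.comap (fun ω => B t ω - B s ω) inferInstance) (F s) μ)
    (hBgauss : ∀ s t : ℝ, 0 ≤ s → s ≤ t → t ≤ T →
      μ.map (fun ω => B t ω - B s ω) =
        ProbabilityTheory.gaussianReal 0 (Real.toNNReal (t - s)))
    (D : ℝ → (Ω → ℝ) → Ω → ℝ)
    (hD : IsDynamicDeviation μ F T D) (hinv : DistInvariant μ D) :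
    ∃ α : ℝ, 0 < α ∧
      (∀ σ : ℝ, ∀ t ∈ Set.Icc (0 : ℝ) T,
        D 0 (fun ω => σ * B t ω) =ᵐ[μ] fun _ => α * σ ^ 2 * t) ∧
      (∀ Z : Ω → ℝ, MemLp Z 2 μ → μ.map Z = ProbabilityTheory.gaussianReal 0 1 →
        ∀ σ : ℝ, D 0 (fun ω => σ * Z ω) =ᵐ[μ] fun _ => α * σ ^ 2) := by
  have hB : IsBrownianMotion μ F T B := ⟨hB0, hBadapted, hBindep, hBgauss⟩
  have hD0 : IsCondDeviation μ ⊥ (D 0) := hF0 ▸ hD.cond 0 ⟨le_rfl, hT.le⟩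
  set ψ : ℝ → ℝ := fun v => lawDeviation μ (D 0) (gaussianReal 0 v.toNNReal)
  have hψ : ∀ {X : Ω → ℝ} {v : ℝ}, HasLaw X (gaussianReal 0 v.toNNReal) μ →
      D 0 X =ᵐ[μ] fun _ => ψ v := fun hX =>
    hinv.ae_eq_lawDeviation hD0 (memLp_of_hasLaw_gaussianReal hX ENNReal.ofNat_ne_top) hX
  have hlin : ∀ v, 0 ≤ v → ψ v = v * ψ 1 := fun v =>
    eq_mul_apply_one_of_add_of_nonneg (f := ψ)
      (fun _ _ => hB.lawDeviation_gaussianReal_add hFle hT hF0 hD hinv)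
      fun _ _ => lawDeviation_nonneg hD0 _
  have hW := hB.hasLaw_const_mul hFle ⟨hT.le, le_rfl⟩ (√T)⁻¹
  rw [inv_pow, Real.sq_sqrt hT.le, inv_mul_cancel₀ hT.ne'] at hW
  have hpos : 0 < ψ 1 := hinv.lawDeviation_pos hD0
    (memLp_of_hasLaw_gaussianReal hW ENNReal.ofNat_ne_top) hW (gaussianReal_ne_dirac (by simp) 0)
  refine ⟨ψ 1, hpos, fun σ t ht => ?_, fun Z hZ hZlaw σ => ?_⟩
  · have h := hψ (hB.hasLaw_const_mul hFle ht σ)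
    rwa [hlin _ (mul_nonneg (sq_nonneg σ) ht.1), mul_comm, ← mul_assoc] at h
  · have hZ1 : HasLaw Z (gaussianReal 0 (1 : ℝ).toNNReal) μ :=
      ⟨hZ.aestronglyMeasurable.aemeasurable, by simpa using hZlaw⟩
    have h := hψ (hasLaw_const_mul_gaussianReal zero_le_one hZ1 σ)
    rwa [mul_one, hlin _ (sq_nonneg σ), mul_comm] at h

/-- **Quadratic scaling on Brownian marginals.**  Let `(D_t)` be a distribution invariant
dynamic deviation measure on a filtered probability space (trivial initial σ-algebra, the
ambient σ-algebra being `F_T`, horizon `T > 0`) supporting a one-dimensional Brownian motion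
`B` adapted to the filtration, with `B_t − B_s` independent of `F_s` and
`N(0, t−s)`-distributed.  Then there is `α > 0` with `D_0(σ B_t) = α σ² t` for all `σ ∈ ℝ`,
`t ∈ [0,T]`; equivalently, for a standard normal `Z ∈ L²`, `f(σ) := D_0(σ Z)` satisfies
`f(σ) = α σ²` for all `σ ∈ ℝ`. -/
theorem distInvariant_quadratic_scaling {Ω : Type*} {m0 : MeasurableSpace Ω}
    (μ : Measure Ω) [IsProbabilityMeasure μ] (T : ℝ) (hT : 0 < T)
    (F : ℝ → MeasurableSpace Ω) (hFmono : Monotone F) (hFle : ∀ s, F s ≤ m0)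
    (hF0 : F 0 = ⊥) (hFT : F T = m0)
    -- a one-dimensional Brownian motion on `[0,T]` adapted to `F`
    (B : ℝ → Ω → ℝ) (hB0 : ∀ ω, B 0 ω = 0)
    (hBadapted : ∀ t ∈ Set.Icc (0 : ℝ) T, Measurable[F t] (B t))
    (hBindep : ∀ s t : ℝ, 0 ≤ s → s ≤ t → t ≤ T →
      ProbabilityTheory.Indep
        (MeasurableSpace.comap (fun ω => B t ω - B s ω) inferInstance) (F s) μ)
    (hBgauss : ∀ s t : ℝ, 0 ≤ s → s ≤ t → t ≤ T →
      μ.map (fun ω => B t ω - B s ω) =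
        ProbabilityTheory.gaussianReal 0 (Real.toNNReal (t - s)))
    (D : ℝ → (Ω → ℝ) → Ω → ℝ)
    (hD : IsDynamicDeviation μ F T D) (hinv : DistInvariant μ D) :
    ∃ α : ℝ, 0 < α ∧
      (∀ σ : ℝ, ∀ t ∈ Set.Icc (0 : ℝ) T,
        D 0 (fun ω => σ * B t ω) =ᵐ[μ] fun _ => α * σ ^ 2 * t) ∧
      (∀ Z : Ω → ℝ, MemLp Z 2 μ → μ.map Z = ProbabilityTheory.gaussianReal 0 1 →
        ∀ σ : ℝ, D 0 (fun ω => σ * Z ω) =ᵐ[μ] fun _ => α * σ ^ 2) :=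
  distInvariant_quadratic_scaling_general μ T hT F hFle hF0 B hB0 hBadapted hBindep hBgauss D hD
    hinv
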